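/- arXiv:1910.09615 — 3 statements merged into one kernel-verified Lean document; each statement's English description precedes it below -/
import Mathlib

section
/- (Two-sided gap). Under the hypotheses of the main bound — f, g₁,…,g_m : ℝⁿ → ℝ convex and differentiable, t > 0, θ* strictly feasible and minimizing B_t over the strictly feasible set D, and p* = inf { f(θ) : g_i(θ) ≤ 0 for all i } finite — one has 0 ≤ f(θ*) - p* ≤ m/t. -/
private lemma convexOn_sum' {E : Type*} [NormedAddCommGroup E] [NormedSpace ℝ E]
    {ι : Type*} (s : Finset ι) (f : ι → E → ℝ)
    (h : ∀ i ∈ s, ConvexOn ℝ Set.univ (f i)) :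
    ConvexOn ℝ Set.univ (fun x => ∑ i ∈ s, f i x) := by
  classical
  induction s using Finset.induction_on with
  | empty => simpa using convexOn_const (0:ℝ) convex_univ
  | insert a s hni ih =>
    simp only [Finset.sum_insert hni]
    exact (h a (Finset.mem_insert_self a s)).add
      (ih fun i hi => h i (Finset.mem_insert_of_mem hi))

private lemma isMin_of_fderiv_zero {E : Type*} [NormedAddCommGroup E] [NormedSpace ℝ E]
    {L : E → ℝ} (hL : ConvexOn ℝ Set.univ L) {x : E}
    (h0 : HasFDerivAt L (0 : E →L[ℝ] ℝ) x) (y : E) : L x ≤ L y := by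
  set φ : ℝ → ℝ := fun s => L (s • (y - x) + x) with hφdef
  have hφc : ConvexOn ℝ Set.univ φ := by
    have := hL.comp_affineMap (AffineMap.lineMap x y)
    have hequ : (AffineMap.lineMap x y : ℝ →ᵃ[ℝ] E) ⁻¹' Set.univ = Set.univ := by simp
    rw [hequ] at this
    have heqφ : φ = L ∘ AffineMap.lineMap x y := by
      funext s; simp [φ, AffineMap.lineMap_apply]
    rw [heqφ]; exact this
  have hline : HasDerivAt (fun s : ℝ => s • (y - x) + x) (y - x) (0:ℝ) := by
    simpa using ((hasDerivAt_id (0:ℝ)).smul_const (y - x)).add_const x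
  have h0' : HasFDerivAt L (0 : E →L[ℝ] ℝ) ((fun s : ℝ => s • (y - x) + x) 0) := by
    simpa using h0
  have hd : HasDerivAt φ 0 0 := by
    have := h0'.comp_hasDerivAt (0:ℝ) hline
    simp only [ContinuousLinearMap.zero_apply] at this
    exact this
  have hs := hφc.le_slope_of_hasDerivAt (Set.mem_univ 0) (Set.mem_univ 1) zero_lt_one hd
  have hφ1 : φ 1 = L y := by simp [φ]
  have hφ0 : φ 0 = L x := by simp [φ]
  rw [slope_def_field] at hs
  simp only [hφ1, hφ0] at hs
  have : 0 ≤ L y - L x := by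
    have := hs
    field_simp at this
    linarith
  linarith

/-- (Two-sided gap). Under the hypotheses of the main bound,
`0 ≤ f(θ*) - p* ≤ m / t`. -/
theorem ipo_two_sided_gap {n m : ℕ}
    (f : EuclideanSpace ℝ (Fin n) → ℝ)
    (g : Fin m → EuclideanSpace ℝ (Fin n) → ℝ)
    (hf : ConvexOn ℝ Set.univ f) (hf' : Differentiable ℝ f)
    (hg : ∀ i, ConvexOn ℝ Set.univ (g i)) (hg' : ∀ i, Differentiable ℝ (g i))
    (t : ℝ) (ht : 0 < t)
    (θs : EuclideanSpace ℝ (Fin n))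
    (hfeas : ∀ i, g i θs < 0)
    (hmin : IsMinOn (fun θ => f θ - (1 / t) * ∑ i, Real.log (-(g i θ)))
      {θ | ∀ i, g i θ < 0} θs)
    (p : ℝ) (hp : IsGLB (f '' {θ | ∀ i, g i θ ≤ 0}) p) :
    0 ≤ f θs - p ∧ f θs - p ≤ m / t := by
  have ht' : t ≠ 0 := ne_of_gt ht
  set c : Fin m → ℝ := fun i => g i θs with hc
  have hcneg : ∀ i, c i < 0 := hfeas
  set lam : Fin m → ℝ := fun i => 1 / (t * (-(c i))) with hlam
  have hlampos : ∀ i, 0 < lam i := fun i => by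
    exact div_pos one_pos (mul_pos ht (neg_pos.2 (hcneg i)))
  set F' := fderiv ℝ f θs with hF'
  set G' : Fin m → _ := fun i => fderiv ℝ (g i) θs with hG'
  -- derivative of barrier
  have hBi : ∀ i, HasFDerivAt (fun θ => Real.log (-(g i θ)))
      ((-(c i))⁻¹ • (-(G' i))) θs := by
    intro i
    have hneg : HasFDerivAt (fun θ => -(g i θ)) (-(G' i)) θs :=
      ((hg' i θs).hasFDerivAt).neg
    exact (Real.hasDerivAt_log (ne_of_gt (neg_pos.2 (hcneg i)))).comp_hasFDerivAt θs hneg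
  have hsum : HasFDerivAt (fun θ => ∑ i, Real.log (-(g i θ)))
      (∑ i, (-(c i))⁻¹ • (-(G' i))) θs :=
    HasFDerivAt.fun_sum fun i _ => hBi i
  have hB : HasFDerivAt (fun θ => f θ - (1 / t) * ∑ i, Real.log (-(g i θ)))
      (F' - (1 / t) • ∑ i, (-(c i))⁻¹ • (-(G' i))) θs :=
    (hf' θs).hasFDerivAt.sub (hsum.const_mul (1 / t))
  -- local min ⇒ derivative zero
  have hopen : IsOpen {θ : EuclideanSpace ℝ (Fin n) | ∀ i, g i θ < 0} := by
    have : {θ : EuclideanSpace ℝ (Fin n) | ∀ i, g i θ < 0}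
        = ⋂ i, {θ | g i θ < 0} := by ext θ; simp
    rw [this]
    exact isOpen_iInter_of_finite fun i =>
      isOpen_lt (hg' i).continuous continuous_const
  have hlocal : IsLocalMin (fun θ => f θ - (1 / t) * ∑ i, Real.log (-(g i θ))) θs :=
    hmin.isLocalMin (hopen.mem_nhds hfeas)
  have hzero : F' - (1 / t) • ∑ i, (-(c i))⁻¹ • (-(G' i)) = 0 :=
    hlocal.hasFDerivAt_eq_zero hB
  -- Lagrangian
  set L : EuclideanSpace ℝ (Fin n) → ℝ := fun θ => f θ + ∑ i, lam i * g i θ with hLdef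
  have hLd : HasFDerivAt L (F' + ∑ i, lam i • G' i) θs :=
    (hf' θs).hasFDerivAt.add
      (HasFDerivAt.fun_sum fun i _ => ((hg' i θs).hasFDerivAt.const_mul (lam i)))
  have heq : F' + ∑ i, lam i • G' i
      = F' - (1 / t) • ∑ i, (-(c i))⁻¹ • (-(G' i)) := by
    rw [Finset.smul_sum, sub_eq_add_neg, ← Finset.sum_neg_distrib]
    congr 1
    apply Finset.sum_congr rfl
    intro i _
    rw [smul_neg, smul_neg, neg_neg, smul_smul]
    congr 1
    have := hcneg i
    simp only [hlam, one_div, mul_inv]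
  have hL0 : HasFDerivAt L (0 : _ →L[ℝ] ℝ) θs := by
    rw [heq, hzero] at hLd; exact hLd
  have hLc : ConvexOn ℝ Set.univ L :=
    hf.add (convexOn_sum' Finset.univ (fun i θ => lam i * g i θ)
      (fun i _ => (hg i).smul (hlampos i).le))
  -- key bound
  have hsumc : ∑ i, lam i * c i = -(m / t) := by
    have : ∀ i, lam i * c i = -(1 / t) := by
      intro i
      have hcne : c i ≠ 0 := (hcneg i).ne
      simp only [hlam]
      field_simp
    rw [Finset.sum_congr rfl fun i _ => this i]
    simp [Finset.sum_const]
    field_simp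
  have hLθs : L θs = f θs - m / t := by
    simp only [hLdef]
    rw [show (∑ i, lam i * g i θs) = ∑ i, lam i * c i from rfl, hsumc]
    ring
  have key : ∀ θ, (∀ i, g i θ ≤ 0) → f θs - m / t ≤ f θ := by
    intro θ hθ
    have h1 : L θs ≤ L θ := isMin_of_fderiv_zero hLc hL0 θ
    have h2 : L θ ≤ f θ := by
      have : ∑ i, lam i * g i θ ≤ 0 :=
        Finset.sum_nonpos fun i _ =>
          mul_nonpos_of_nonneg_of_nonpos (hlampos i).le (hθ i)
      simp only [hLdef]; linarith
    rw [hLθs] at h1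
    exact h1.trans h2
  constructor
  · have : p ≤ f θs := hp.1 ⟨θs, fun i => (hfeas i).le, rfl⟩
    linarith
  · have hlb : f θs - m / t ∈ lowerBounds (f '' {θ | ∀ i, g i θ ≤ 0}) := by
      rintro y ⟨θ, hθ, rfl⟩
      exact key θ hθ
    have := hp.2 hlb
    linarith
end

section
/- (Dual value on the central path). Let f : ℝⁿ → ℝ and g₁,…,g_m : ℝⁿ → ℝ be convex and differentiable, let t > 0, and suppose θ* lies in the strictly feasible set D = {θ : g_i(θ) < 0 for all i} and is a local minimizer on D of B_t(θ) = f(θ) - (1/t)·Σ_{i=1}^m log(-g_i(θ)). Define λ_i* = -1/(t·g_i(θ*)). Then the dual function d(λ) = inf_{θ ∈ ℝⁿ} [ f(θ) + Σ_{i=1}^m λ_i·g_i(θ) ] satisfies d(λ*) = f(θ*) - m/t. -/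
open Filter Set Topology

/-- A convex differentiable function with zero derivative at a point attains its
global minimum there. -/
lemma convex_isMin_of_fderiv_zero {E : Type*} [NormedAddCommGroup E] [NormedSpace ℝ E] {x : E}
    {L : E → ℝ} (hL : ConvexOn ℝ Set.univ L) (hL' : HasFDerivAt L (0 : E →L[ℝ] ℝ) x) (y : E) :
    L x ≤ L y := by
  set A : ℝ →ᵃ[ℝ] E := AffineMap.lineMap x y with hA
  have hAc : ConvexOn ℝ Set.univ (L ∘ A) := by
    have := hL.comp_affineMap A
    simpa using this
  have hA0 : A 0 = x := by simp [hA]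
  have hA1 : A 1 = y := by simp [hA]
  have hder : HasDerivAt (L ∘ A) 0 0 := by
    have h1 : HasDerivAt (fun s : ℝ => A s) (y - x) 0 := by
      have : (fun s : ℝ => A s) = fun s : ℝ => s • (y - x) + x := by
        funext s; simp only [hA, AffineMap.lineMap_apply_module]; module
      rw [this]
      simpa using ((hasDerivAt_id (0:ℝ)).smul_const (y - x)).add_const x
    have := (hA0 ▸ hL').comp_hasDerivAt 0 h1
    simpa using this
  have := hAc.le_slope_of_hasDerivAt (S := Set.univ) (Set.mem_univ (0:ℝ))
    (Set.mem_univ (1:ℝ)) one_pos hder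
  rw [slope_def_field] at this
  simp only [Function.comp, hA0, hA1] at this
  have h01 : ((L (A 1) : ℝ) - L (A 0)) / (1 - 0) = L y - L x := by
    simp [hA0, hA1]
  -- `this : 0 ≤ slope ...`
  simpa [hA0, hA1, div_one] using this

/-- (Dual value on the central path). If `f` and the `gᵢ` are convex and differentiable,
`t > 0`, and `θ*` is a strictly feasible local minimizer on `D = {θ | ∀ i, gᵢ(θ) < 0}`
of the barrier objective `B_t(θ) = f(θ) - (1/t) ∑ᵢ log(-gᵢ(θ))`, then with the
central-path multipliers `λᵢ* = -1 / (t * gᵢ(θ*))` the dual value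
`d(λ*) = inf_θ [f(θ) + ∑ᵢ λᵢ* gᵢ(θ)]` equals `f(θ*) - m / t`. -/
theorem ipo_dual_value_central_path {n m : ℕ}
    (f : EuclideanSpace ℝ (Fin n) → ℝ)
    (g : Fin m → EuclideanSpace ℝ (Fin n) → ℝ)
    (hf : ConvexOn ℝ Set.univ f) (hf' : Differentiable ℝ f)
    (hg : ∀ i, ConvexOn ℝ Set.univ (g i)) (hg' : ∀ i, Differentiable ℝ (g i))
    (t : ℝ) (ht : 0 < t)
    (θs : EuclideanSpace ℝ (Fin n))
    (hfeas : ∀ i, g i θs < 0)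
    (hmin : IsLocalMinOn (fun θ => f θ - (1 / t) * ∑ i, Real.log (-(g i θ)))
      {θ | ∀ i, g i θ < 0} θs) :
    IsGLB (Set.range fun θ => f θ + ∑ i, (-1 / (t * g i θs)) * g i θ)
      (f θs - m / t) := by
  set lam : Fin m → ℝ := fun i => -1 / (t * g i θs) with hlam
  set L : EuclideanSpace ℝ (Fin n) → ℝ := fun θ => f θ + ∑ i, lam i * g i θ with hL
  have hgne : ∀ i, g i θs ≠ 0 := fun i => (hfeas i).ne
  have hlampos : ∀ i, 0 < lam i := by
    intro i
    have : t * g i θs < 0 := mul_neg_of_pos_of_neg ht (hfeas i)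
    exact div_pos_of_neg_of_neg (by norm_num) this
  -- the strictly feasible set is open and is a neighborhood of θs
  have hD : IsOpen {θ : EuclideanSpace ℝ (Fin n) | ∀ i, g i θ < 0} := by
    have : {θ : EuclideanSpace ℝ (Fin n) | ∀ i, g i θ < 0}
        = ⋂ i, (g i) ⁻¹' Set.Iio 0 := by
      ext θ; simp
    rw [this]
    exact isOpen_iInter_of_finite fun i =>
      (isOpen_Iio).preimage (hg' i).continuous
  have hDnhds : {θ : EuclideanSpace ℝ (Fin n) | ∀ i, g i θ < 0} ∈ 𝓝 θs :=
    hD.mem_nhds hfeas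
  -- θs is an unconstrained local minimum of the barrier objective
  have hlocal : IsLocalMin (fun θ => f θ - (1 / t) * ∑ i, Real.log (-(g i θ))) θs := by
    rw [IsLocalMinOn, nhdsWithin_eq_nhds.2 hDnhds] at hmin
    exact hmin
  -- derivative computations
  set F := fderiv ℝ f θs with hF
  set G : Fin m → _ := fun i => fderiv ℝ (g i) θs with hG
  have hlog : ∀ i, HasFDerivAt (fun θ => Real.log (-(g i θ))) ((g i θs)⁻¹ • G i) θs := by
    intro i
    have h1 : HasFDerivAt (fun θ => -(g i θ)) (-(G i)) θs := ((hg' i) θs).hasFDerivAt.neg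
    have h2 := h1.log (by simpa using hgne i)
    rw [smul_neg, inv_neg, neg_smul, neg_neg] at h2
    exact h2
  have hBder : HasFDerivAt (fun θ => f θ - (1 / t) * ∑ i, Real.log (-(g i θ)))
      (F - (1 / t) • ∑ i, (g i θs)⁻¹ • G i) θs := by
    have hsum : HasFDerivAt (fun θ => ∑ i, Real.log (-(g i θ)))
        (∑ i, (g i θs)⁻¹ • G i) θs := HasFDerivAt.fun_sum fun i _ => hlog i
    exact (hf' θs).hasFDerivAt.sub (hsum.const_mul (1 / t))
  have hB0 : F - (1 / t) • ∑ i, (g i θs)⁻¹ • G i = 0 := by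
    rw [← hBder.fderiv]
    exact hlocal.fderiv_eq_zero
  have hLder : HasFDerivAt L (F + ∑ i, lam i • G i) θs := by
    have hsum : HasFDerivAt (fun θ => ∑ i, lam i * g i θ) (∑ i, lam i • G i) θs :=
      HasFDerivAt.fun_sum fun i _ => ((hg' i) θs).hasFDerivAt.const_mul (lam i)
    exact (hf' θs).hasFDerivAt.add hsum
  have hLd0 : F + ∑ i, lam i • G i = (0 : _ →L[ℝ] ℝ) := by
    have hsum : ∑ i, lam i • G i = -((1 / t) • ∑ i, (g i θs)⁻¹ • G i) := by
      rw [Finset.smul_sum, ← Finset.sum_neg_distrib]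
      refine Finset.sum_congr rfl fun i _ => ?_
      rw [smul_smul, ← neg_smul, hlam]
      congr 1
      field_simp
    rw [hsum, ← sub_eq_add_neg]
    exact hB0
  -- convexity of the Lagrangian
  have hLconv : ConvexOn ℝ Set.univ L := by
    have hsum : ∀ s : Finset (Fin m),
        ConvexOn ℝ Set.univ (fun θ => ∑ i ∈ s, lam i * g i θ) := by
      intro s
      induction s using Finset.induction_on with
      | empty => simpa using convexOn_const (0 : ℝ) convex_univ
      | @insert a s hnot ih =>
        simp only [Finset.sum_insert hnot]
        exact (((hg _).smul (hlampos _).le)).add ih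
    exact hf.add (hsum Finset.univ)
  have hglobal : ∀ y, L θs ≤ L y := fun y =>
    convex_isMin_of_fderiv_zero hLconv (hLd0 ▸ hLder) y
  -- value at θs
  have hval : L θs = f θs - m / t := by
    have heach : ∀ i, lam i * g i θs = -(1 / t) := by
      intro i
      have h2 : t * g i θs ≠ 0 := mul_ne_zero ht.ne' (hgne i)
      rw [hlam]
      field_simp
      rw [div_self (hgne i)]
    rw [hL]
    simp only [Finset.sum_congr rfl fun i _ => heach i, Finset.sum_const,
      Finset.card_univ, Fintype.card_fin, nsmul_eq_mul]
    ring
  refine IsLeast.isGLB ⟨⟨θs, hval⟩, ?_⟩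
  rintro v ⟨y, rfl⟩
  rw [← hval]
  exact hglobal y
end

section
/- (Convergence of barrier minimizers' values as t → ∞). Let f : ℝⁿ → ℝ and g₁,…,g_m : ℝⁿ → ℝ be convex and differentiable, let p* = inf { f(θ) : g_i(θ) ≤ 0 for all i } be finite, and suppose that for each t > 0 there is a point θ_t in the strictly feasible set D = {θ : g_i(θ) < 0 for all i} minimizing B_t(θ) = f(θ) - (1/t)·Σ_{i=1}^m log(-g_i(θ)) over D. Then f(θ_t) → p* as t → +∞ (along the filter atTop on (0, ∞)). -/
lemma ipo_aux_log_slope : Filter.Tendsto (fun l : ℝ => Real.log (1 - l) / l)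
    (nhdsWithin 0 (Set.Ioi 0)) (nhds (-1)) := by
  have h1 : HasDerivAt (fun l : ℝ => 1 - l) (-1) 0 := by
    simpa using ((hasDerivAt_id (0:ℝ)).const_sub 1)
  have h2 : HasDerivAt (fun l : ℝ => Real.log (1 - l)) (-1) 0 := by
    have := (Real.hasDerivAt_log (by norm_num : (1:ℝ) - 0 ≠ 0)).comp 0 h1
    simpa [Function.comp_def] using this
  have h3 := hasDerivAt_iff_tendsto_slope.mp h2
  have h4 : Filter.Tendsto (slope (fun l : ℝ => Real.log (1 - l)) 0)
      (nhdsWithin 0 (Set.Ioi 0)) (nhds (-1)) :=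
    h3.mono_left (nhdsWithin_mono 0 (fun x hx => ne_of_gt hx))
  refine h4.congr' ?_
  filter_upwards [self_mem_nhdsWithin] with x hx
  simp [slope_def_field, Real.log_one]

/-- (Convergence of barrier minimizers' values as `t → ∞`). If `f` and the `gᵢ` are
convex and differentiable, `p* = inf { f(θ) | ∀ i, gᵢ(θ) ≤ 0 }` is finite, and for
each `t > 0` the point `θ_t` is strictly feasible and minimizes
`B_t(θ) = f(θ) - (1/t) ∑ᵢ log(-gᵢ(θ))` over `D = {θ | ∀ i, gᵢ(θ) < 0}`, then
`f(θ_t) → p*` as `t → +∞`. -/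
theorem ipo_barrier_minimizer_value_convergence {n m : ℕ}
    (f : EuclideanSpace ℝ (Fin n) → ℝ)
    (g : Fin m → EuclideanSpace ℝ (Fin n) → ℝ)
    (hf : ConvexOn ℝ Set.univ f) (hf' : Differentiable ℝ f)
    (hg : ∀ i, ConvexOn ℝ Set.univ (g i)) (hg' : ∀ i, Differentiable ℝ (g i))
    (p : ℝ) (hp : IsGLB (f '' {θ | ∀ i, g i θ ≤ 0}) p)
    (θ : ℝ → EuclideanSpace ℝ (Fin n))
    (hθfeas : ∀ t : ℝ, 0 < t → ∀ i, g i (θ t) < 0)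
    (hθmin : ∀ t : ℝ, 0 < t →
      IsMinOn (fun x => f x - (1 / t) * ∑ i, Real.log (-(g i x)))
        {x | ∀ i, g i x < 0} (θ t)) :
    Filter.Tendsto (fun t : ℝ => f (θ t)) Filter.atTop (nhds p) := by
  have hlow : ∀ t : ℝ, 0 < t → p ≤ f (θ t) := fun t ht =>
    hp.1 ⟨θ t, fun i => (hθfeas t ht i).le, rfl⟩
  have hkey : ∀ t : ℝ, 0 < t → f (θ t) ≤ p + m / t := by
    intro t ht
    have hub : ∀ y, (∀ i : Fin m, g i y ≤ 0) → f (θ t) - m / t ≤ f y := by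
      intro y hy
      set x := θ t with hx
      have key : ∀ l : ℝ, l ∈ Set.Ioo (0:ℝ) 1 →
          f x - f y ≤ ((m : ℝ) / t) * (-(Real.log (1 - l) / l)) := by
        intro l hl
        obtain ⟨hl0, hl1⟩ := hl
        have h1l : (0:ℝ) < 1 - l := by linarith
        set z := (1 - l) • x + l • y with hz
        have hgzx : ∀ i, g i z ≤ (1 - l) * g i x := by
          intro i
          have h := (hg i).2 (Set.mem_univ x) (Set.mem_univ y) h1l.le hl0.le
            (by ring : (1 - l) + l = 1)
          rw [smul_eq_mul, smul_eq_mul] at h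
          have := hy i
          show g i ((1 - l) • x + l • y) ≤ (1 - l) * g i x
          nlinarith
        have hzD : z ∈ {x | ∀ i, g i x < 0} := by
          intro i
          have := hgzx i
          nlinarith [hθfeas t ht i]
        have hmin : f x - (1/t) * ∑ i, Real.log (-(g i x))
            ≤ f z - (1/t) * ∑ i, Real.log (-(g i z)) := hθmin t ht hzD
        have hfz : f z ≤ (1 - l) * f x + l * f y :=
          hf.2 (Set.mem_univ x) (Set.mem_univ y) h1l.le hl0.le (by ring)
        have hlog : ∀ i : Fin m, Real.log (1 - l) + Real.log (-(g i x))
            ≤ Real.log (-(g i z)) := by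
          intro i
          have hpos : 0 < -(g i x) := neg_pos.mpr (hθfeas t ht i)
          have hle : (1 - l) * (-(g i x)) ≤ -(g i z) := by
            have := hgzx i; nlinarith
          calc Real.log (1 - l) + Real.log (-(g i x))
              = Real.log ((1 - l) * (-(g i x))) :=
                (Real.log_mul (ne_of_gt h1l) (ne_of_gt hpos)).symm
            _ ≤ Real.log (-(g i z)) := Real.log_le_log (by positivity) hle
        have hsum : (m : ℝ) * Real.log (1 - l) + ∑ i, Real.log (-(g i x))
            ≤ ∑ i, Real.log (-(g i z)) := by
          have h := Finset.sum_le_sum (fun i (_ : i ∈ Finset.univ) => hlog i)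
          simpa [Finset.sum_add_distrib, Finset.card_univ, mul_comm] using h
        have ht' : (0:ℝ) < 1/t := by positivity
        have hmain : l * (f x - f y) ≤ -((m : ℝ) * Real.log (1 - l)) / t := by
          have h2 := mul_le_mul_of_nonneg_left hsum ht'.le
          have h3 : f x - (1/t) * ∑ i, Real.log (-(g i x))
              ≤ (1 - l) * f x + l * f y
                - (1/t) * ((m : ℝ) * Real.log (1 - l) + ∑ i, Real.log (-(g i x))) := by
            nlinarith
          have : l * (f x - f y) ≤ (1/t) * (-((m : ℝ) * Real.log (1 - l))) := by nlinarith
          calc l * (f x - f y) ≤ (1/t) * (-((m : ℝ) * Real.log (1 - l))) := this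
            _ = -((m : ℝ) * Real.log (1 - l)) / t := by ring
        have hC : ((m : ℝ) / t) * (-(Real.log (1 - l) / l))
            = (-((m : ℝ) * Real.log (1 - l)) / t) / l := by
          field_simp
        rw [hC, le_div_iff₀ hl0]
        linarith [hmain]
      have hlim : Filter.Tendsto (fun l : ℝ => ((m : ℝ)/t) * (-(Real.log (1-l)/l)))
          (nhdsWithin 0 (Set.Ioi 0)) (nhds ((m : ℝ)/t)) := by
        have h := (ipo_aux_log_slope.neg).const_mul ((m : ℝ)/t)
        simpa using h
      have hev : ∀ᶠ l in nhdsWithin (0:ℝ) (Set.Ioi 0),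
          f x - f y ≤ ((m : ℝ)/t) * (-(Real.log (1-l)/l)) := by
        filter_upwards [Ioo_mem_nhdsGT_of_mem
          (Set.mem_Ico.mpr ⟨le_refl (0:ℝ), one_pos⟩)] with l hl using key l hl
      have := ge_of_tendsto hlim hev
      linarith
    have hmem : f (θ t) - m / t ∈ lowerBounds (f '' {θ | ∀ i, g i θ ≤ 0}) := by
      rintro v ⟨y, hy, rfl⟩
      exact hub y hy
    have := hp.2 hmem
    linarith
  have hmt : Filter.Tendsto (fun t : ℝ => p + (m : ℝ) / t) Filter.atTop (nhds p) := by
    have : Filter.Tendsto (fun t : ℝ => (m : ℝ) / t) Filter.atTop (nhds 0) :=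
      Filter.Tendsto.div_atTop tendsto_const_nhds Filter.tendsto_id
    simpa using tendsto_const_nhds.add this
  refine tendsto_of_tendsto_of_tendsto_of_le_of_le' tendsto_const_nhds hmt ?_ ?_
  · filter_upwards [Filter.eventually_gt_atTop 0] with t ht using hlow t ht
  · filter_upwards [Filter.eventually_gt_atTop 0] with t ht using hkey t ht
end
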